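/- arXiv:2604.19248 — 4 statements merged into one kernel-verified Lean document; each statement's English description precedes it below -/
import Mathlib

section
/- Let the target path p : ℝ → ℝ² have unit tangent e'_1(s) = (cos θ_r(s), sin θ_r(s)) with θ_r differentiable, curvature κ_r = θ_r', and unit normal e'_2(s) = (−sin θ_r(s), cos θ_r(s)), so that p'(s) = e'_1(s). Let q : [t₀,t₁] → ℝ² be differentiable with q̇(t) = v(t)(cos θ_o(t), sin θ_o(t)) for functions v, θ_o, and let s_r : [t₀,t₁] → ℝ be differentiable. Define q'(t) = q(t) − p(s_r(t)) and z(t) = q'(t) · e'_2(s_r(t)). Then the tangential component η(t) = q'(t) · e'_1(s_r(t)) is differentiable and satisfies η̇(t) = v(t) cos(θ_o(t) − θ_r(s_r(t))) − ṡ_r(t)·(1 − κ_r(s_r(t)) z(t)) for all t ∈ [t₀,t₁]. -/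
/-!
By the product rule, `η̇ = (q̇ - ṡ_r p'(s_r)) ⬝ e'_1(s_r) + q' ⬝ (d/dt e'_1(s_r))`. Since `p' = e'_1`
is the unit vector at angle `θ_r`, and differentiating it turns it by a right angle
(`d/dt e'_1(s_r) = κ_r(s_r) ṡ_r e'_2(s_r)`), the three terms are `v cos(θ_o - θ_r(s_r))`
(the dot product of two unit vectors), `-ṡ_r` and `κ_r(s_r) ṡ_r z`.
-/

/-- Euclidean dot product on `ℝ × ℝ`. -/
def dot (a b : ℝ × ℝ) : ℝ := a.1 * b.1 + a.2 * b.2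

open Real

lemma dot_sub_left (a b c : ℝ × ℝ) : dot (a - b) c = dot a c - dot b c := by
  simp only [dot, Prod.fst_sub, Prod.snd_sub]; ring

lemma dot_smul_left (r : ℝ) (a b : ℝ × ℝ) : dot (r • a) b = r * dot a b := by
  simp only [dot, Prod.smul_fst, Prod.smul_snd, smul_eq_mul]; ring

lemma dot_smul_right (r : ℝ) (a b : ℝ × ℝ) : dot a (r • b) = r * dot a b := by
  simp only [dot, Prod.smul_fst, Prod.smul_snd, smul_eq_mul]; ring

lemma dot_cos_sin (a b : ℝ) : dot (cos a, sin a) (cos b, sin b) = cos (a - b) := by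
  rw [dot, cos_sub]

lemma HasDerivWithinAt.dot {f g : ℝ → ℝ × ℝ} {f' g' : ℝ × ℝ} {s : Set ℝ} {x : ℝ}
    (hf : HasDerivWithinAt f f' s x) (hg : HasDerivWithinAt g g' s x) :
    HasDerivWithinAt (fun t => dot (f t) (g t)) (dot f' (g x) + dot (f x) g') s x := by
  have fst {h : ℝ → ℝ × ℝ} {h'} (hh : HasDerivWithinAt h h' s x) :
      HasDerivWithinAt (fun t => (h t).1) h'.1 s x :=
    (ContinuousLinearMap.fst ℝ ℝ ℝ).hasFDerivAt.comp_hasDerivWithinAt x hh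
  have snd {h : ℝ → ℝ × ℝ} {h'} (hh : HasDerivWithinAt h h' s x) :
      HasDerivWithinAt (fun t => (h t).2) h'.2 s x :=
    (ContinuousLinearMap.snd ℝ ℝ ℝ).hasFDerivAt.comp_hasDerivWithinAt x hh
  refine (((fst hf).mul (fst hg)).add ((snd hf).mul (snd hg))).congr_deriv ?_
  rw [_root_.dot, _root_.dot]
  ring

lemma HasDerivWithinAt.cos_sin {f : ℝ → ℝ} {f' : ℝ} {s : Set ℝ} {x : ℝ}
    (hf : HasDerivWithinAt f f' s x) :
    HasDerivWithinAt (fun t => (Real.cos (f t), Real.sin (f t)))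
      (f' • (-Real.sin (f x), Real.cos (f x))) s x := by
  refine (hf.cos.prodMk hf.sin).congr_deriv ?_
  rw [Prod.smul_mk, smul_eq_mul, smul_eq_mul, mul_comm f', mul_comm f']

/-- time derivative of the tangential component
`η(t) = q'(t) ⬝ e'_1(s_r(t))` of the vector `q'(t) = q(t) − p(s_r(t))` from the
reference point to the plant:
`η̇ = v cos(θ_o − θ_r(s_r)) − ṡ_r (1 − κ_r(s_r) z)`, with
`z = q' ⬝ e'_2(s_r)`. -/
theorem tangential_component_derivative
    (θr : ℝ → ℝ) (hθr : Differentiable ℝ θr)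
    (κr : ℝ → ℝ) (hκr : ∀ s, κr s = deriv θr s)
    (e1 e2 : ℝ → ℝ × ℝ)
    (he1 : ∀ s, e1 s = (Real.cos (θr s), Real.sin (θr s)))
    (he2 : ∀ s, e2 s = (-Real.sin (θr s), Real.cos (θr s)))
    (p : ℝ → ℝ × ℝ) (hp : ∀ s, HasDerivAt p (e1 s) s)
    (t0 t1 : ℝ)
    (q : ℝ → ℝ × ℝ) (v θo : ℝ → ℝ)
    (hq : ∀ t ∈ Set.Icc t0 t1,
      HasDerivWithinAt q (v t • (Real.cos (θo t), Real.sin (θo t))) (Set.Icc t0 t1) t)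
    (sr sr' : ℝ → ℝ)
    (hsr : ∀ t ∈ Set.Icc t0 t1, HasDerivWithinAt sr (sr' t) (Set.Icc t0 t1) t)
    (z : ℝ → ℝ) (hz : ∀ t, z t = dot (q t - p (sr t)) (e2 (sr t))) :
    ∀ t ∈ Set.Icc t0 t1,
      HasDerivWithinAt (fun t => dot (q t - p (sr t)) (e1 (sr t)))
        (v t * Real.cos (θo t - θr (sr t)) - sr' t * (1 - κr (sr t) * z t))
        (Set.Icc t0 t1) t := by
  intro t ht
  have hθ : HasDerivWithinAt (fun t => θr (sr t)) (κr (sr t) * sr' t) (Set.Icc t0 t1) t := by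
    rw [hκr]; exact (hθr _).hasDerivAt.comp_hasDerivWithinAt t (hsr t ht)
  have he1' : HasDerivWithinAt (fun t => e1 (sr t)) ((κr (sr t) * sr' t) • e2 (sr t))
      (Set.Icc t0 t1) t := by
    simpa only [he1, he2] using hθ.cos_sin
  have hp' : HasDerivWithinAt (fun t => p (sr t)) (sr' t • e1 (sr t)) (Set.Icc t0 t1) t :=
    (hp _).scomp_hasDerivWithinAt t (hsr t ht)
  refine (((hq t ht).sub hp').dot he1').congr_deriv ?_
  rw [hz, dot_sub_left, dot_smul_left, dot_smul_left, dot_smul_right, he1, dot_cos_sin,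
    dot_cos_sin, sub_self, cos_zero, Pi.sub_apply]
  ring
end

section
/- (Third derivative of the tracking error, eq. (3.4).) Under the hypotheses of the previous statement, assume additionally that β, r, δ and k_r are differentiable with derivatives β̇, ṙ, δ̇ and k̇_r on [t₀,t₁], and write A = a₁₁β + (a₁₂/v) r + a₁₃ δ (so that A = κ v²) and D = 1 − k_r z. Then z is three times differentiable and z⃛ = (a₁₁ β̇ + (a₁₂/v) ṙ + a₁₃ δ̇) cos θ − (A²/v) sin θ + 3 k_r A v sin θ cos θ / D − k̇_r v² cos² θ / D − k_r k̇_r v² z cos² θ / D² − 3 k_r² v³ sin θ cos² θ / D² on [t₀,t₁]. -/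
/-!
With `Ω = A - k_r v² cos θ / D` the heading equation reads `θ̇ = Ω / v`, so `ż = v sin θ`
gives `z̈ = Ω cos θ` and `z⃛ = Ω̇ cos θ - (Ω² / v) sin θ`. Expanding `Ω̇` with
`Ḋ = -(k̇_r z + k_r v sin θ)` and `Ω²` produces the six terms of (3.4).
-/

open Real Set

/-- `v θ̇` along the error dynamics, when `A = κ v²`. -/
noncomputable def speedMulHeadingRate (v : ℝ) (A k z θ : ℝ → ℝ) (t : ℝ) : ℝ :=
  A t - k t * v ^ 2 * cos (θ t) / (1 - k t * z t)

section

variable {θ A k z Ω : ℝ → ℝ} {s : Set ℝ} {t v w A' k' Ω' : ℝ}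

theorem hasDerivWithinAt_const_mul_sin (hv : v ≠ 0) (hθ : HasDerivWithinAt θ (w / v) s t) :
    HasDerivWithinAt (fun x => v * sin (θ x)) (cos (θ t) * w) s t :=
  (hθ.sin.const_mul v).congr_deriv (by field_simp)

theorem hasDerivWithinAt_cos_mul (hθ : HasDerivWithinAt θ (Ω t / v) s t)
    (hΩ : HasDerivWithinAt Ω Ω' s t) :
    HasDerivWithinAt (fun x => cos (θ x) * Ω x)
      (Ω' * cos (θ t) - Ω t ^ 2 / v * sin (θ t)) s t :=
  (hθ.cos.mul hΩ).congr_deriv (by ring)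

theorem hasDerivWithinAt_speedMulHeadingRate (hD : 1 - k t * z t ≠ 0)
    (hA : HasDerivWithinAt A A' s t) (hk : HasDerivWithinAt k k' s t)
    (hz : HasDerivWithinAt z (v * sin (θ t)) s t)
    (hθ : HasDerivWithinAt θ (speedMulHeadingRate v A k z θ t / v) s t) :
    HasDerivWithinAt (speedMulHeadingRate v A k z θ)
      (A' - k' * v ^ 2 * cos (θ t) / (1 - k t * z t)
        + k t * v * sin (θ t) * speedMulHeadingRate v A k z θ t / (1 - k t * z t)
        - k t * v ^ 2 * cos (θ t) * (k' * z t + k t * v * sin (θ t)) / (1 - k t * z t) ^ 2)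
      s t := by
  have hD' : HasDerivWithinAt (fun x => 1 - k x * z x) (0 - (k' * z t + k t * (v * sin (θ t))))
      s t := (hasDerivWithinAt_const t s 1).sub (hk.mul hz)
  have hnum : HasDerivWithinAt (fun x => k x * v ^ 2 * cos (θ x))
      (k' * v ^ 2 * cos (θ t) +
        k t * v ^ 2 * (-sin (θ t) * (speedMulHeadingRate v A k z θ t / v))) s t :=
    (hk.mul_const (v ^ 2)).mul hθ.cos
  exact (hA.sub (hnum.div hD' hD)).congr_deriv (by field_simp; ring)

end

/-- Third derivative of the tracking error, eq. (3.4):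
with `A = a₁₁β + (a₁₂/v)r + a₁₃δ` and `D = 1 − k_r z`, under the error
dynamics the tracking error `z` is three times differentiable with
`z⃛ = (a₁₁β̇ + (a₁₂/v)ṙ + a₁₃δ̇) cos θ − (A²/v) sin θ
      + 3 k_r A v sin θ cos θ / D − k̇_r v² cos² θ / D
      − k_r k̇_r v² z cos² θ / D² − 3 k_r² v³ sin θ cos² θ / D²`. -/
theorem tracking_error_third_derivative
    (v a11 a12 a13 : ℝ) (hv : 0 < v)
    (t0 t1 : ℝ)
    (β r δ θ z kr κ β' r' δ' kr' : ℝ → ℝ)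
    (hβder : ∀ t ∈ Set.Icc t0 t1, HasDerivWithinAt β (β' t) (Set.Icc t0 t1) t)
    (hrder : ∀ t ∈ Set.Icc t0 t1, HasDerivWithinAt r (r' t) (Set.Icc t0 t1) t)
    (hδder : ∀ t ∈ Set.Icc t0 t1, HasDerivWithinAt δ (δ' t) (Set.Icc t0 t1) t)
    (hkrder : ∀ t ∈ Set.Icc t0 t1, HasDerivWithinAt kr (kr' t) (Set.Icc t0 t1) t)
    (hκ : ∀ t, κ t = a11 / v ^ 2 * β t + a12 / v ^ 3 * r t + a13 / v ^ 2 * δ t)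
    (hzder : ∀ t ∈ Set.Icc t0 t1,
      HasDerivWithinAt z (v * Real.sin (θ t)) (Set.Icc t0 t1) t)
    (hθder : ∀ t ∈ Set.Icc t0 t1,
      HasDerivWithinAt θ
        (κ t * v - kr t * v * Real.cos (θ t) / (1 - kr t * z t))
        (Set.Icc t0 t1) t)
    (hD : ∀ t ∈ Set.Icc t0 t1, 1 - kr t * z t > 0)
    (A D z2 : ℝ → ℝ)
    (hA : ∀ t, A t = a11 * β t + a12 / v * r t + a13 * δ t)
    (hDdef : ∀ t, D t = 1 - kr t * z t)
    (hz2 : ∀ t, z2 t =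
      Real.cos (θ t) * (A t - kr t * v ^ 2 * Real.cos (θ t) / D t)) :
    ∀ t ∈ Set.Icc t0 t1,
      HasDerivWithinAt (fun t => v * Real.sin (θ t)) (z2 t) (Set.Icc t0 t1) t ∧
      HasDerivWithinAt z2
        ((a11 * β' t + a12 / v * r' t + a13 * δ' t) * Real.cos (θ t) -
          A t ^ 2 / v * Real.sin (θ t) +
          3 * kr t * A t * v * Real.sin (θ t) * Real.cos (θ t) / D t -
          kr' t * v ^ 2 * Real.cos (θ t) ^ 2 / D t -
          kr t * kr' t * v ^ 2 * z t * Real.cos (θ t) ^ 2 / D t ^ 2 -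
          3 * kr t ^ 2 * v ^ 3 * Real.sin (θ t) * Real.cos (θ t) ^ 2 / D t ^ 2)
        (Set.Icc t0 t1) t := by
  intro t ht
  obtain rfl : κ = _ := funext hκ
  obtain rfl : D = _ := funext hDdef
  obtain rfl : z2 = fun x => cos (θ x) * speedMulHeadingRate v A kr z θ x := funext hz2
  have hv0 : v ≠ 0 := hv.ne'
  have hD0 : 1 - kr t * z t ≠ 0 := (hD t ht).ne'
  have hθ : HasDerivWithinAt θ (speedMulHeadingRate v A kr z θ t / v) (Icc t0 t1) t := by
    convert hθder t ht using 1
    rw [speedMulHeadingRate, hA]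
    field_simp
  have hA' : HasDerivWithinAt A (a11 * β' t + a12 / v * r' t + a13 * δ' t) (Icc t0 t1) t :=
    ((((hβder t ht).const_mul a11).add ((hrder t ht).const_mul (a12 / v))).add
      ((hδder t ht).const_mul a13)).congr (fun x _ => hA x) (hA t)
  refine ⟨hasDerivWithinAt_const_mul_sin hv0 hθ, ?_⟩
  refine (hasDerivWithinAt_cos_mul hθ (hasDerivWithinAt_speedMulHeadingRate hD0 hA'
    (hkrder t ht) (hzder t ht) hθ)).congr_deriv ?_
  rw [speedMulHeadingRate]
  field_simp
  ring
end

section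
/- (Feedback linearization of the tracking error without steering resistance.) Let v > 0, a₁₃ ≠ 0, and α₁, α₂, α₃ ∈ ℝ. Under the hypotheses of the third-derivative statement (error dynamics ż = v sin θ, θ̇ = κv − k_r v cos θ/(1 − k_r z) with κ = (a₁₁/v²)β + (a₁₂/v³)r + (a₁₃/v²)δ, D = 1 − k_r z > 0), assume additionally cos θ(t) ≠ 0 for all t and that the steering dynamics are δ̇ = u₀ where u₀ is defined pointwise by u₀ = (1/(a₁₃ cos θ)) · [ −α₁ z̈ − α₂ v sin θ − α₃ z − ( (a₁₁ β̇ + (a₁₂/v) ṙ) cos θ − (A²/v) sin θ + 3 k_r A v sin θ cos θ / D − k̇_r v² cos² θ / D − k_r k̇_r v² z cos² θ / D² − 3 k_r² v³ sin θ cos² θ / D² ) ], with A = a₁₁β + (a₁₂/v)r + a₁₃δ and z̈ = cos θ (A − k_r v² cos θ / D). Then z satisfies the linear differential equation z⃛ + α₁ z̈ + α₂ ż + α₃ z = 0 on [t₀,t₁]. -/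
/-!
Since `κ v = A / v`, the error dynamics give `z̈ = v cos θ · θ̇ = cos θ (A - k_r v² cos θ / D)`.
Differentiating once more, `z⃛ = a₁₃ δ̇ cos θ + R`, where `R` collects the
terms free of the input; the law `u₀` is chosen so that `a₁₃ u₀ cos θ = -α₁ z̈ - α₂ ż - α₃ z - R`,
which cancels `R` and leaves the linear equation.
-/

open Real

section TrackingError

variable {s : Set ℝ} {t v : ℝ} {θ z k A D : ℝ → ℝ}

theorem HasDerivWithinAt.tracking_accel (hv : v ≠ 0)
    (hθ : HasDerivWithinAt θ (A t / v - k t * v * Real.cos (θ t) / D t) s t) :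
    HasDerivWithinAt (fun τ => v * Real.sin (θ τ))
      (Real.cos (θ t) * (A t - k t * v ^ 2 * Real.cos (θ t) / D t)) s t :=
  (hθ.sin.const_mul v).congr_deriv (by field_simp)

theorem HasDerivWithinAt.tracking_jerk {k' A' : ℝ} (hv : v ≠ 0) (hD : ∀ τ, D τ = 1 - k τ * z τ)
    (hDt : D t ≠ 0) (hz : HasDerivWithinAt z (v * Real.sin (θ t)) s t)
    (hθ : HasDerivWithinAt θ (A t / v - k t * v * Real.cos (θ t) / D t) s t)
    (hk : HasDerivWithinAt k k' s t) (hA : HasDerivWithinAt A A' s t) :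
    HasDerivWithinAt (fun τ => Real.cos (θ τ) * (A τ - k τ * v ^ 2 * Real.cos (θ τ) / D τ))
      (A' * Real.cos (θ t) - A t ^ 2 / v * Real.sin (θ t) +
        3 * k t * A t * v * Real.sin (θ t) * Real.cos (θ t) / D t -
        k' * v ^ 2 * Real.cos (θ t) ^ 2 / D t -
        k t * k' * v ^ 2 * z t * Real.cos (θ t) ^ 2 / D t ^ 2 -
        3 * k t ^ 2 * v ^ 3 * Real.sin (θ t) * Real.cos (θ t) ^ 2 / D t ^ 2) s t := by
  have hD' : HasDerivWithinAt D (-(k' * z t + k t * (v * Real.sin (θ t)))) s t := by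
    rw [show D = fun τ => 1 - k τ * z τ from funext hD]
    simpa using (hk.mul hz).const_sub 1
  have hcurv : HasDerivWithinAt (fun τ => k τ * v ^ 2 * Real.cos (θ τ) / D τ) _ s t :=
    ((hk.mul_const (v ^ 2)).mul hθ.cos).div hD' hDt
  refine (hθ.cos.mul (hA.sub hcurv)).congr_deriv ?_
  simp only [Pi.mul_apply, Pi.sub_apply]
  field_simp
  ring

end TrackingError

/-- Feedback linearization of the tracking error without
steering resistance: with steering dynamics `δ̇ = u₀` and `u₀` the
feedback-linearizing law of eq. (3.5), the tracking error satisfies the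
linear differential equation `z⃛ + α₁ z̈ + α₂ ż + α₃ z = 0` on `[t₀,t₁]`. -/
theorem feedback_linearization_tracking_error
    (v a11 a12 a13 : ℝ) (hv : 0 < v) (ha13 : a13 ≠ 0)
    (α1 α2 α3 : ℝ)
    (t0 t1 : ℝ)
    (β r δ θ z kr κ β' r' kr' : ℝ → ℝ)
    (hβder : ∀ t ∈ Set.Icc t0 t1, HasDerivWithinAt β (β' t) (Set.Icc t0 t1) t)
    (hrder : ∀ t ∈ Set.Icc t0 t1, HasDerivWithinAt r (r' t) (Set.Icc t0 t1) t)
    (hkrder : ∀ t ∈ Set.Icc t0 t1, HasDerivWithinAt kr (kr' t) (Set.Icc t0 t1) t)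
    (hκ : ∀ t, κ t = a11 / v ^ 2 * β t + a12 / v ^ 3 * r t + a13 / v ^ 2 * δ t)
    (hzder : ∀ t ∈ Set.Icc t0 t1,
      HasDerivWithinAt z (v * Real.sin (θ t)) (Set.Icc t0 t1) t)
    (hθder : ∀ t ∈ Set.Icc t0 t1,
      HasDerivWithinAt θ
        (κ t * v - kr t * v * Real.cos (θ t) / (1 - kr t * z t))
        (Set.Icc t0 t1) t)
    (hD : ∀ t ∈ Set.Icc t0 t1, 1 - kr t * z t > 0)
    (hcos : ∀ t ∈ Set.Icc t0 t1, Real.cos (θ t) ≠ 0)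
    (A D z2 u0 : ℝ → ℝ)
    (hA : ∀ t, A t = a11 * β t + a12 / v * r t + a13 * δ t)
    (hDdef : ∀ t, D t = 1 - kr t * z t)
    (hz2 : ∀ t, z2 t =
      Real.cos (θ t) * (A t - kr t * v ^ 2 * Real.cos (θ t) / D t))
    (hu0 : ∀ t, u0 t =
      1 / (a13 * Real.cos (θ t)) *
        (-α1 * z2 t - α2 * (v * Real.sin (θ t)) - α3 * z t -
          ((a11 * β' t + a12 / v * r' t) * Real.cos (θ t) -
            A t ^ 2 / v * Real.sin (θ t) +
            3 * kr t * A t * v * Real.sin (θ t) * Real.cos (θ t) / D t -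
            kr' t * v ^ 2 * Real.cos (θ t) ^ 2 / D t -
            kr t * kr' t * v ^ 2 * z t * Real.cos (θ t) ^ 2 / D t ^ 2 -
            3 * kr t ^ 2 * v ^ 3 * Real.sin (θ t) * Real.cos (θ t) ^ 2 / D t ^ 2)))
    (hδder : ∀ t ∈ Set.Icc t0 t1, HasDerivWithinAt δ (u0 t) (Set.Icc t0 t1) t) :
    ∃ z1 z2' z3 : ℝ → ℝ,
      (∀ t ∈ Set.Icc t0 t1, HasDerivWithinAt z (z1 t) (Set.Icc t0 t1) t) ∧
      (∀ t ∈ Set.Icc t0 t1, HasDerivWithinAt z1 (z2' t) (Set.Icc t0 t1) t) ∧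
      (∀ t ∈ Set.Icc t0 t1, HasDerivWithinAt z2' (z3 t) (Set.Icc t0 t1) t) ∧
      (∀ t ∈ Set.Icc t0 t1, z3 t + α1 * z2' t + α2 * z1 t + α3 * z t = 0) := by
  have hθ : ∀ t ∈ Set.Icc t0 t1, HasDerivWithinAt θ
      (A t / v - kr t * v * cos (θ t) / D t) (Set.Icc t0 t1) t := fun t ht =>
    (hθder t ht).congr_deriv (by rw [hκ, hA, hDdef]; field_simp [hv.ne'])
  have hAder : ∀ t ∈ Set.Icc t0 t1, HasDerivWithinAt A
      (a11 * β' t + a12 / v * r' t + a13 * u0 t) (Set.Icc t0 t1) t := fun t ht => by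
    rw [show A = _ from funext hA]
    exact (((hβder t ht).const_mul a11).add ((hrder t ht).const_mul _)).add
      ((hδder t ht).const_mul a13)
  refine ⟨fun t => v * sin (θ t), z2,
    fun t => -(α1 * z2 t + α2 * (v * sin (θ t)) + α3 * z t), hzder,
    fun t ht => ((hθ t ht).tracking_accel hv.ne').congr_deriv (hz2 t).symm,
    fun t ht => ?_, fun t _ => by ring⟩
  have hDt : D t ≠ 0 := hDdef t ▸ (hD t ht).ne'
  have hjerk := (hzder t ht).tracking_jerk hv.ne' hDdef hDt (hθ t ht) (hkrder t ht) (hAder t ht)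
  rw [← show z2 = _ from funext hz2] at hjerk
  refine hjerk.congr_deriv ?_
  rw [hu0]
  field_simp [hcos t ht]
  ring
end

section
/- (Path-following criterion is achieved in closed loop.) Let v > 0, a₁₃ ≠ 0, and α₁, α₂, α₃ ∈ ℝ be such that every complex root of X³ + α₁X² + α₂X + α₃ has strictly negative real part. Suppose that on [t₀,∞) the hypotheses of the feedback-linearization statement hold (error dynamics ż = v sin θ, θ̇ = κv − k_r v cos θ/(1 − k_r z) with κ = (a₁₁/v²)β + (a₁₂/v³)r + (a₁₃/v²)δ, 1 − k_r z > 0, cos θ ≠ 0, and δ̇ = u₀ with u₀ the feedback-linearizing control law). Then the signed tracking error satisfies lim_{t→∞} z(t) = 0. -/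
/-!
In closed loop the tracking error obeys `z⃛ + α₁ z̈ + α₂ ż + α₃ z = 0`: the control `u₀` cancels
everything else in the third derivative of `z`. Factoring the Hurwitz polynomial as
`(X - l₁)(X - l₂)(X - l₃)` with `Re lᵢ < 0` turns this equation into a cascade of three
first-order equations `ẏ = l y + g`, and by variation of constants each of them sends inputs
`g → 0` to solutions `y → 0`.
-/

open Filter Set Topology Polynomial

theorem exists_cubic_vieta {K : Type*} [Field K] [IsAlgClosed K] (a b c : K) :
    ∃ l₁ l₂ l₃ : K, a = -(l₁ + l₂ + l₃) ∧ b = l₁ * l₂ + l₁ * l₃ + l₂ * l₃ ∧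
      c = -(l₁ * l₂ * l₃) := by
  obtain ⟨l₁, hl₁⟩ := IsAlgClosed.exists_root (C 1 * X ^ 3 + C a * X ^ 2 + C b * X + C c)
    (by rw [degree_cubic one_ne_zero]; norm_num)
  obtain ⟨l₂, hl₂⟩ := IsAlgClosed.exists_root
    (C 1 * X ^ 2 + C (a + l₁) * X + C (b + l₁ * (a + l₁)))
    (by rw [degree_quadratic one_ne_zero]; norm_num)
  simp only [IsRoot, eval_add, eval_mul, eval_C, eval_pow, eval_X, one_mul] at hl₁ hl₂
  exact ⟨l₁, l₂, -(a + l₁) - l₂, by ring, by linear_combination hl₂,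
    by linear_combination hl₁ - l₁ * hl₂⟩

theorem hasDerivAt_cexp_mul_ofReal_sub (c : ℂ) (a t : ℝ) :
    HasDerivAt (fun s : ℝ => Complex.exp (c * (s - a : ℝ)))
      (c * Complex.exp (c * (t - a : ℝ))) t := by
  have h : HasDerivAt (fun s : ℝ => c * ((s - a : ℝ) : ℂ)) c t := by
    simpa using ((hasDerivAt_id t).sub_const a).ofReal_comp.const_mul c
  simpa [mul_comm] using h.cexp

section LinearODE

variable {E : Type*} [NormedAddCommGroup E] [NormedSpace ℂ E]

theorem norm_le_of_hasDerivWithinAt_eq_smul_add {c : ℂ} (hc : c.re < 0) {f g : ℝ → E}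
    {a η t : ℝ} (hf : ∀ s ∈ Ici a, HasDerivWithinAt f (c • f s + g s) (Ici a) s)
    (hg : ∀ s ∈ Ici a, ‖g s‖ ≤ η) (ht : a ≤ t) :
    ‖f t‖ ≤ Real.exp (c.re * (t - a)) * ‖f a‖ + η / -c.re := by
  set μ := -c.re
  have hμ : 0 < μ := neg_pos.2 hc
  have hη : 0 ≤ η := (norm_nonneg _).trans (hg a self_mem_Ici)
  set h : ℝ → E := fun s => Complex.exp (-c * (s - a : ℝ)) • f s
  have hh : ∀ s ∈ Ici a,
      HasDerivWithinAt h (Complex.exp (-c * (s - a : ℝ)) • g s) (Ici a) s := fun s hs =>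
    ((hasDerivAt_cexp_mul_ofReal_sub (-c) a s).hasDerivWithinAt.smul (hf s hs)).congr_deriv
      (by module)
  have hnorm : ∀ s, ‖Complex.exp (-c * (s - a : ℝ))‖ = Real.exp (μ * (s - a)) := fun s => by
    rw [Complex.norm_exp, Complex.re_mul_ofReal, Complex.neg_re]
  -- compare `‖h‖` with the solution of `B' = η exp (μ (s - a))`, `B a = ‖f a‖`
  have hB : ∀ s, HasDerivAt (fun s => ‖f a‖ + η * (Real.exp (μ * (s - a)) - 1) / μ)
      (η * Real.exp (μ * (s - a))) s := fun s =>
    (((((hasDerivAt_id' s).sub_const a).const_mul μ).exp.sub_const 1).const_mul η |>.div_const μ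
      |>.const_add ‖f a‖).congr_deriv (by field_simp)
  have hht := image_norm_le_of_norm_deriv_right_le_deriv_boundary (f := h)
    (fun s hs => (hh s hs.1).continuousWithinAt.mono Icc_subset_Ici_self)
    (fun s hs => (hh s hs.1).mono (Ici_subset_Ici.2 hs.1)) (by simp [h]) hB
    (fun s hs => by rw [norm_smul, hnorm, mul_comm]; gcongr; exact hg s hs.1)
    (right_mem_Icc.2 ht)
  have hft : f t = Complex.exp (c * (t - a : ℝ)) • h t := by
    simp only [h, smul_smul, ← Complex.exp_add]
    simp
  have hexp : Real.exp (c.re * (t - a)) * Real.exp (μ * (t - a)) = 1 := by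
    rw [← Real.exp_add]; simp [μ]
  calc ‖f t‖ = Real.exp (c.re * (t - a)) * ‖h t‖ := by
        rw [hft, norm_smul, Complex.norm_exp, Complex.re_mul_ofReal]
    _ ≤ Real.exp (c.re * (t - a)) * (‖f a‖ + η * (Real.exp (μ * (t - a)) - 1) / μ) := by
        gcongr
    _ = Real.exp (c.re * (t - a)) * ‖f a‖ + η * (1 - Real.exp (c.re * (t - a))) / μ := by
        linear_combination η / μ * hexp
    _ ≤ Real.exp (c.re * (t - a)) * ‖f a‖ + η / μ := by
        gcongr
        nlinarith [Real.exp_pos (c.re * (t - a))]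

theorem tendsto_zero_of_hasDerivWithinAt_eq_smul_add {c : ℂ} (hc : c.re < 0) {f g : ℝ → E}
    {t₀ : ℝ} (hf : ∀ t ∈ Ici t₀, HasDerivWithinAt f (c • f t + g t) (Ici t₀) t)
    (hg : Tendsto g atTop (𝓝 0)) : Tendsto f atTop (𝓝 0) := by
  rw [Metric.tendsto_atTop]
  intro ε hε
  obtain ⟨N, hN⟩ := Metric.tendsto_atTop.1 hg (ε * -c.re / 2) (by nlinarith)
  set a := max N t₀
  have hbound : ∀ t ≥ a, ‖f t‖ ≤ Real.exp (c.re * (t - a)) * ‖f a‖ + ε / 2 := by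
    intro t ht
    have hfa : ∀ s ∈ Ici a, HasDerivWithinAt f (c • f s + g s) (Ici a) s := fun s hs =>
      (hf s ((le_max_right N t₀).trans hs)).mono (Ici_subset_Ici.2 (le_max_right N t₀))
    have hga : ∀ s ∈ Ici a, ‖g s‖ ≤ ε * -c.re / 2 := fun s hs => by
      simpa using (hN s ((le_max_left N t₀).trans hs)).le
    convert norm_le_of_hasDerivWithinAt_eq_smul_add hc hfa hga ht using 2
    field_simp [hc.ne]
  have hdecay : Tendsto (fun t => Real.exp (c.re * (t - a)) * ‖f a‖) atTop (𝓝 0) := by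
    have hlin : Tendsto (fun t => c.re * (t - a)) atTop atBot :=
      (tendsto_atTop_add_const_right _ (-a) tendsto_id).const_mul_atTop_of_neg hc
    simpa using (Real.tendsto_exp_atBot.comp hlin).mul_const ‖f a‖
  obtain ⟨M, hM⟩ := (hdecay.eventually_lt_const (half_pos hε)).exists_forall_of_atTop
  refine ⟨max M a, fun t ht => ?_⟩
  rw [dist_zero_right]
  linarith [hbound t (le_of_max_le_right ht), hM t (le_of_max_le_left ht)]

theorem tendsto_zero_of_hurwitz_cubic_ode {a b c : ℂ}
    (hroots : ∀ x : ℂ, x ^ 3 + a * x ^ 2 + b * x + c = 0 → x.re < 0)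
    {x₀ x₁ x₂ : ℝ → E} {t₀ : ℝ}
    (h₀ : ∀ t ∈ Ici t₀, HasDerivWithinAt x₀ (x₁ t) (Ici t₀) t)
    (h₁ : ∀ t ∈ Ici t₀, HasDerivWithinAt x₁ (x₂ t) (Ici t₀) t)
    (h₂ : ∀ t ∈ Ici t₀, HasDerivWithinAt x₂ (-(a • x₂ t + b • x₁ t + c • x₀ t)) (Ici t₀) t) :
    Tendsto x₀ atTop (𝓝 0) := by
  obtain ⟨l₁, l₂, l₃, rfl, rfl, rfl⟩ := exists_cubic_vieta a b c
  have hneg : ∀ x, (x - l₁) * (x - l₂) * (x - l₃) = 0 → x.re < 0 :=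
    fun x hx => hroots x (by linear_combination hx)
  -- `y₂ = (d/dt - l₂)(d/dt - l₃) x₀` and `y₁ = (d/dt - l₃) x₀`
  set y₂ := fun t => x₂ t - (l₂ + l₃) • x₁ t + (l₂ * l₃) • x₀ t
  set y₁ := fun t => x₁ t - l₃ • x₀ t
  have hy₂ : Tendsto y₂ atTop (𝓝 0) := by
    refine tendsto_zero_of_hasDerivWithinAt_eq_smul_add (t₀ := t₀) (g := 0) (hneg l₁ (by ring))
      (fun t ht => ?_) tendsto_const_nhds
    refine (((h₂ t ht).sub ((h₁ t ht).const_smul (l₂ + l₃))).add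
      ((h₀ t ht).const_smul (l₂ * l₃))).congr_deriv ?_
    simp only [y₂, Pi.zero_apply]
    module
  have hy₁ : Tendsto y₁ atTop (𝓝 0) := by
    refine tendsto_zero_of_hasDerivWithinAt_eq_smul_add (t₀ := t₀) (hneg l₂ (by ring))
      (fun t ht => ((h₁ t ht).sub ((h₀ t ht).const_smul l₃)).congr_deriv ?_) hy₂
    simp only [y₁, y₂]
    module
  exact tendsto_zero_of_hasDerivWithinAt_eq_smul_add (t₀ := t₀) (hneg l₃ (by ring))
    (fun t ht => (h₀ t ht).congr_deriv (by simp only [y₁]; module)) hy₁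

end LinearODE

theorem tendsto_zero_of_hurwitz_cubic_ode_real {a b c : ℝ}
    (hroots : ∀ x : ℂ, x ^ 3 + (a : ℂ) * x ^ 2 + (b : ℂ) * x + (c : ℂ) = 0 → x.re < 0)
    {x₀ x₁ x₂ : ℝ → ℝ} {t₀ : ℝ}
    (h₀ : ∀ t ∈ Ici t₀, HasDerivWithinAt x₀ (x₁ t) (Ici t₀) t)
    (h₁ : ∀ t ∈ Ici t₀, HasDerivWithinAt x₁ (x₂ t) (Ici t₀) t)
    (h₂ : ∀ t ∈ Ici t₀, HasDerivWithinAt x₂ (-a * x₂ t - b * x₁ t - c * x₀ t) (Ici t₀) t) :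
    Tendsto x₀ atTop (𝓝 0) := by
  have h := tendsto_zero_of_hurwitz_cubic_ode hroots (x₂ := fun t => (x₂ t : ℂ))
    (fun t ht => (h₀ t ht).ofReal_comp) (fun t ht => (h₁ t ht).ofReal_comp)
    (fun t ht => (h₂ t ht).ofReal_comp.congr_deriv
      (by push_cast; simp only [smul_eq_mul]; ring))
  simpa [Function.comp_def] using (Complex.continuous_re.tendsto 0).comp h

section PathFollowing

variable {v a11 a12 a13 α1 α2 α3 t0 : ℝ} {β r δ θ z kr κ β' r' kr' A D z2 u0 : ℝ → ℝ}

theorem hasDerivWithinAt_v_mul_sin (hv : v ≠ 0)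
    (hκ : ∀ t, κ t = a11 / v ^ 2 * β t + a12 / v ^ 3 * r t + a13 / v ^ 2 * δ t)
    (hθder : ∀ t ∈ Ici t0, HasDerivWithinAt θ
      (κ t * v - kr t * v * Real.cos (θ t) / (1 - kr t * z t)) (Ici t0) t)
    (hD : ∀ t ∈ Ici t0, 1 - kr t * z t > 0)
    (hA : ∀ t, A t = a11 * β t + a12 / v * r t + a13 * δ t)
    (hDdef : ∀ t, D t = 1 - kr t * z t)
    (hz2 : ∀ t, z2 t = Real.cos (θ t) * (A t - kr t * v ^ 2 * Real.cos (θ t) / D t)) :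
    ∀ t ∈ Ici t0, HasDerivWithinAt (fun t => v * Real.sin (θ t)) (z2 t) (Ici t0) t := by
  intro t ht
  refine (((Real.hasDerivAt_sin (θ t)).comp_hasDerivWithinAt t (hθder t ht)).const_mul v
    ).congr_deriv ?_
  have hD₀ := (hD t ht).ne'
  rw [hz2, hκ, hA, hDdef]
  field_simp

theorem hasDerivWithinAt_z2 (hv : v ≠ 0) (ha13 : a13 ≠ 0)
    (hβder : ∀ t ∈ Ici t0, HasDerivWithinAt β (β' t) (Ici t0) t)
    (hrder : ∀ t ∈ Ici t0, HasDerivWithinAt r (r' t) (Ici t0) t)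
    (hkrder : ∀ t ∈ Ici t0, HasDerivWithinAt kr (kr' t) (Ici t0) t)
    (hκ : ∀ t, κ t = a11 / v ^ 2 * β t + a12 / v ^ 3 * r t + a13 / v ^ 2 * δ t)
    (hzder : ∀ t ∈ Ici t0, HasDerivWithinAt z (v * Real.sin (θ t)) (Ici t0) t)
    (hθder : ∀ t ∈ Ici t0, HasDerivWithinAt θ
      (κ t * v - kr t * v * Real.cos (θ t) / (1 - kr t * z t)) (Ici t0) t)
    (hD : ∀ t ∈ Ici t0, 1 - kr t * z t > 0)
    (hcos : ∀ t ∈ Ici t0, Real.cos (θ t) ≠ 0)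
    (hA : ∀ t, A t = a11 * β t + a12 / v * r t + a13 * δ t)
    (hDdef : ∀ t, D t = 1 - kr t * z t)
    (hz2 : ∀ t, z2 t = Real.cos (θ t) * (A t - kr t * v ^ 2 * Real.cos (θ t) / D t))
    (hu0 : ∀ t, u0 t =
      1 / (a13 * Real.cos (θ t)) *
        (-α1 * z2 t - α2 * (v * Real.sin (θ t)) - α3 * z t -
          ((a11 * β' t + a12 / v * r' t) * Real.cos (θ t) -
            A t ^ 2 / v * Real.sin (θ t) +
            3 * kr t * A t * v * Real.sin (θ t) * Real.cos (θ t) / D t -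
            kr' t * v ^ 2 * Real.cos (θ t) ^ 2 / D t -
            kr t * kr' t * v ^ 2 * z t * Real.cos (θ t) ^ 2 / D t ^ 2 -
            3 * kr t ^ 2 * v ^ 3 * Real.sin (θ t) * Real.cos (θ t) ^ 2 / D t ^ 2)))
    (hδder : ∀ t ∈ Ici t0, HasDerivWithinAt δ (u0 t) (Ici t0) t) :
    ∀ t ∈ Ici t0, HasDerivWithinAt z2
      (-α1 * z2 t - α2 * (v * Real.sin (θ t)) - α3 * z t) (Ici t0) t := by
  intro t ht
  have hA' : HasDerivWithinAt A (a11 * β' t + a12 / v * r' t + a13 * u0 t) (Ici t0) t := by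
    rw [funext hA]
    exact (((hβder t ht).const_mul a11).add ((hrder t ht).const_mul (a12 / v))).add
      ((hδder t ht).const_mul a13)
  have hD' : HasDerivWithinAt D (-(kr' t * z t + kr t * (v * Real.sin (θ t)))) (Ici t0) t := by
    rw [funext hDdef]
    exact ((hasDerivWithinAt_const t _ 1).sub ((hkrder t ht).mul (hzder t ht))).congr_deriv
      (by ring)
  have hcos' := (Real.hasDerivAt_cos (θ t)).comp_hasDerivWithinAt t (hθder t ht)
  have hD₀ := (hD t ht).ne'
  have hDt : D t ≠ 0 := hDdef t ▸ hD₀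
  have hz2' := hcos'.mul (hA'.sub ((((hkrder t ht).mul_const (v ^ 2)).mul hcos').div hD' hDt))
  refine (hz2'.congr (fun s _ => hz2 s) (hz2 t)).congr_deriv ?_
  have hcosθ := hcos t ht
  simp only [hu0, hz2, hκ, hA, hDdef, Function.comp_apply, Pi.mul_apply, Pi.sub_apply,
    Pi.div_apply]
  field_simp
  ring

end PathFollowing

/-- Path-following criterion is achieved in closed loop: under
the hypotheses of the feedback-linearization statement on `[t₀,∞)` and with
Hurwitz coefficients `α₁, α₂, α₃`, the signed tracking error satisfies
`lim_{t→∞} z(t) = 0`. -/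
theorem closed_loop_path_following
    (v a11 a12 a13 : ℝ) (hv : 0 < v) (ha13 : a13 ≠ 0)
    (α1 α2 α3 : ℝ)
    (hroots : ∀ x : ℂ,
      x ^ 3 + (α1 : ℂ) * x ^ 2 + (α2 : ℂ) * x + (α3 : ℂ) = 0 → x.re < 0)
    (t0 : ℝ)
    (β r δ θ z kr κ β' r' kr' : ℝ → ℝ)
    (hβder : ∀ t ∈ Set.Ici t0, HasDerivWithinAt β (β' t) (Set.Ici t0) t)
    (hrder : ∀ t ∈ Set.Ici t0, HasDerivWithinAt r (r' t) (Set.Ici t0) t)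
    (hkrder : ∀ t ∈ Set.Ici t0, HasDerivWithinAt kr (kr' t) (Set.Ici t0) t)
    (hκ : ∀ t, κ t = a11 / v ^ 2 * β t + a12 / v ^ 3 * r t + a13 / v ^ 2 * δ t)
    (hzder : ∀ t ∈ Set.Ici t0,
      HasDerivWithinAt z (v * Real.sin (θ t)) (Set.Ici t0) t)
    (hθder : ∀ t ∈ Set.Ici t0,
      HasDerivWithinAt θ
        (κ t * v - kr t * v * Real.cos (θ t) / (1 - kr t * z t))
        (Set.Ici t0) t)
    (hD : ∀ t ∈ Set.Ici t0, 1 - kr t * z t > 0)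
    (hcos : ∀ t ∈ Set.Ici t0, Real.cos (θ t) ≠ 0)
    (A D z2 u0 : ℝ → ℝ)
    (hA : ∀ t, A t = a11 * β t + a12 / v * r t + a13 * δ t)
    (hDdef : ∀ t, D t = 1 - kr t * z t)
    (hz2 : ∀ t, z2 t =
      Real.cos (θ t) * (A t - kr t * v ^ 2 * Real.cos (θ t) / D t))
    (hu0 : ∀ t, u0 t =
      1 / (a13 * Real.cos (θ t)) *
        (-α1 * z2 t - α2 * (v * Real.sin (θ t)) - α3 * z t -
          ((a11 * β' t + a12 / v * r' t) * Real.cos (θ t) -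
            A t ^ 2 / v * Real.sin (θ t) +
            3 * kr t * A t * v * Real.sin (θ t) * Real.cos (θ t) / D t -
            kr' t * v ^ 2 * Real.cos (θ t) ^ 2 / D t -
            kr t * kr' t * v ^ 2 * z t * Real.cos (θ t) ^ 2 / D t ^ 2 -
            3 * kr t ^ 2 * v ^ 3 * Real.sin (θ t) * Real.cos (θ t) ^ 2 / D t ^ 2)))
    (hδder : ∀ t ∈ Set.Ici t0, HasDerivWithinAt δ (u0 t) (Set.Ici t0) t) :
    Filter.Tendsto z Filter.atTop (nhds 0) := by
  exact tendsto_zero_of_hurwitz_cubic_ode_real hroots hzder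
    (hasDerivWithinAt_v_mul_sin hv.ne' hκ hθder hD hA hDdef hz2)
    (hasDerivWithinAt_z2 hv.ne' ha13 hβder hrder hkrder hκ hzder hθder hD hcos hA hDdef hz2 hu0
      hδder)
end
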